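/- Let G be reductive acting linearly on V over a field of characteristic 0, χ, ε characters with ε ∈ C(χ), codim_V V^{us}(G,χ) ≥ 2, and suppose the sheaf L_{Y_ε,ε} := (q_ε* O_{V^{ss}(G,ε)})^G_ε on Y_ε is invertible. Then for the morphism ψ: Y_χ → Y_ε: (i) ψ_* L_{Y_χ,ε} = L_{Y_ε,ε}, and (ii) the natural map ψ* L_{Y_ε,ε} → L_{Y_χ,ε} is an isomorphism. -/

import Mathlib

/-!
Sections of `L_{Y_χ,δ}` over (the image of) an open `W ⊆ V^{ss}(G,χ)` are the
`δ`-semiinvariant rational functions regular on `W` (`stdSect`).  (i) says: over each affine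
chart `D(f)` of `Y_ε` (`f` an `ε^{mm}`-semiinvariant, `q_ε⁻¹ D(f) = D(f)`), the
`ε`-semiinvariant functions regular on `D(f) ∩ V^{ss}(G,χ)` coincide with those regular on all
of `D(f)`.  (ii) says: a trivializing section `s` of `L_{Y_ε,ε}` over `D(f)` also trivializes
`L_{Y_χ,ε}` over `ψ⁻¹ D(f)`.
-/

open MvPolynomial

section

variable {K : Type} [Field K] {G : Type} [Group G] {m : ℕ}

def IsSemistablePt (ρ : G →* ((Fin m → K) ≃ₗ[K] (Fin m → K))) (χ : G →* Kˣ)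
    (x : Fin m → K) : Prop :=
  ∃ n : ℕ, 1 ≤ n ∧ ∃ f : MvPolynomial (Fin m) K,
    (∀ (g : G) (y : Fin m → K), eval (ρ g y) f = ((χ g : K)) ^ n * eval y f) ∧
    eval x f ≠ 0

def Semiinv (ρ : G →* ((Fin m → K) ≃ₗ[K] (Fin m → K))) (α : G →* Kˣ)
    (f : MvPolynomial (Fin m) K) : Prop :=
  ∀ (g : G) (y : Fin m → K), eval (ρ g y) f = (α g : K) * eval y f

def SemiinvFrac (ρ : G →* ((Fin m → K) ≃ₗ[K] (Fin m → K))) (α : G →* Kˣ)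
    (u : FractionRing (MvPolynomial (Fin m) K)) : Prop :=
  ∃ (a b : MvPolynomial (Fin m) K) (β : G →* Kˣ), b ≠ 0 ∧
    Semiinv ρ (α * β) a ∧ Semiinv ρ β b ∧
    u * algebraMap (MvPolynomial (Fin m) K) (FractionRing (MvPolynomial (Fin m) K)) b
      = algebraMap (MvPolynomial (Fin m) K) (FractionRing (MvPolynomial (Fin m) K)) a

def RegOn (W : Set (Fin m → K)) (u : FractionRing (MvPolynomial (Fin m) K)) : Prop :=
  ∀ x ∈ W, ∃ a b : MvPolynomial (Fin m) K, eval x b ≠ 0 ∧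
    u * algebraMap (MvPolynomial (Fin m) K) (FractionRing (MvPolynomial (Fin m) K)) b
      = algebraMap (MvPolynomial (Fin m) K) (FractionRing (MvPolynomial (Fin m) K)) a

def stdSect (ρ : G →* ((Fin m → K) ≃ₗ[K] (Fin m → K))) (δ : G →* Kˣ)
    (W : Set (Fin m → K)) : Set (FractionRing (MvPolynomial (Fin m) K)) :=
  {u | SemiinvFrac ρ δ u ∧ RegOn W u}

def Dset (h : MvPolynomial (Fin m) K) : Set (Fin m → K) := {x | eval x h ≠ 0}

end

/-!
Hartogs extension across the unstable locus.  Write a rational function regular on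
`D(f) ∩ V^{ss}(G,χ)` as a reduced fraction `A / B`.  If `B` vanished at a point of `D(f)`,
some prime factor `p` of `B` would vanish there, but `p` cannot vanish at any point of
`D(f) ∩ V^{ss}(G,χ)`.  Since `V^{ss}(G,χ)` is covered by the sets `D(g)`, the Nullstellensatz
gives `p ∣ f g`, hence `p ∣ g`, for each such `g`; so the hypersurface `Z(p)` would lie in the
unstable locus.  Sections over `D(f)` therefore agree with sections over its semistable part,
which gives (i), and (ii) follows by restricting trivializations.
-/

theorem exists_prime_dvd_of_map_eq_zero {R S : Type*} [CommRing R] [IsDomain R]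
    [UniqueFactorizationMonoid R] [CommRing S] [Nontrivial S] [NoZeroDivisors S]
    (φ : R →+* S) {B : R} (hB : B ≠ 0) (hφB : φ B = 0) :
    ∃ p : R, Prime p ∧ p ∣ B ∧ φ p = 0 := by
  induction B using UniqueFactorizationMonoid.induction_on_prime with
  | h₁ => exact absurd rfl hB
  | h₂ q hq => exact absurd hφB (hq.map φ).ne_zero
  | h₃ a q ha hq ih =>
    rw [map_mul] at hφB
    rcases mul_eq_zero.mp hφB with hq0 | ha0
    · exact ⟨q, hq, dvd_mul_right _ _, hq0⟩
    · obtain ⟨p, hp, hpa, hp0⟩ := ih ha ha0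
      exact ⟨p, hp, hpa.mul_left q, hp0⟩

theorem Prime.dvd_of_dvd_reduced_den {R F : Type*} [CommRing R] [CommRing F] [Algebra R F]
    [IsFractionRing R F] {u : F} {A B a b p : R} (hAB : IsRelPrime A B)
    (hu : u * algebraMap R F B = algebraMap R F A) (hv : u * algebraMap R F b = algebraMap R F a)
    (hp : Prime p) (hpB : p ∣ B) : p ∣ b := by
  have hcross : A * b = a * B := by
    apply IsFractionRing.injective R F
    rw [map_mul, map_mul, ← hu, ← hv]
    ring
  refine (hp.dvd_or_dvd (hcross ▸ hpB.mul_left a)).resolve_left fun hpA => ?_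
  exact hp.not_isUnit (hAB hpA hpB)

namespace MvPolynomial

theorem totalDegree_pos_of_prime {σ K : Type*} [Field K] {p : MvPolynomial σ K}
    (hp : Prime p) : 0 < p.totalDegree := by
  refine Nat.pos_of_ne_zero fun hdeg => hp.not_isUnit ?_
  have hC := totalDegree_eq_zero_iff_eq_C.mp hdeg
  have hcoeff : p.coeff 0 ≠ 0 := fun h0 => hp.ne_zero (by rw [hC, h0, map_zero])
  exact (isUnit_iff_totalDegree_of_isReduced).mpr ⟨hcoeff.isUnit, hdeg⟩

end MvPolynomial

section Nullstellensatz

variable {σ K : Type*} [Field K] [IsAlgClosed K] [Finite σ]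

theorem Prime.dvd_of_forall_eval_eq_zero {p h : MvPolynomial σ K} (hp : Prime p)
    (hvan : ∀ x, eval x p = 0 → eval x h = 0) : p ∣ h := by
  have hmem : h ∈ vanishingIdeal K (zeroLocus K (Ideal.span {p})) := by
    rw [zeroLocus_span]
    intro x hx
    simpa using hvan x (by simpa using hx)
  rw [vanishingIdeal_zeroLocus_eq_radical] at hmem
  obtain ⟨k, hk⟩ := hmem
  exact hp.dvd_of_dvd_pow (Ideal.mem_span_singleton.mp hk)

theorem Prime.eval_eq_zero_of_forall_eval_ne_zero {p f g : MvPolynomial σ K} (hp : Prime p)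
    (hpf : ¬ p ∣ f) (hvan : ∀ x, eval x p = 0 → eval x f ≠ 0 → eval x g = 0)
    {x : σ → K} (hx : eval x p = 0) : eval x g = 0 := by
  have hpfg : p ∣ f * g := by
    refine hp.dvd_of_forall_eval_eq_zero fun y hy => ?_
    rw [map_mul, mul_eq_zero, or_iff_not_imp_left]
    exact hvan y hy
  obtain ⟨c, rfl⟩ := (hp.dvd_or_dvd hpfg).resolve_left hpf
  rw [map_mul, hx, zero_mul]

end Nullstellensatz

section Sections

variable {K : Type} [Field K] {G : Type} [Group G] {m : ℕ}

theorem RegOn.mono {W W' : Set (Fin m → K)} {u : FractionRing (MvPolynomial (Fin m) K)}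
    (hu : RegOn W' u) (hW : W ⊆ W') : RegOn W u :=
  fun x hx => hu x (hW hx)

theorem stdSect_anti (ρ : G →* ((Fin m → K) ≃ₗ[K] (Fin m → K))) (δ : G →* Kˣ)
    {W W' : Set (Fin m → K)} (hW : W ⊆ W') : stdSect ρ δ W' ⊆ stdSect ρ δ W :=
  fun _ hu => ⟨hu.1, hu.2.mono hW⟩

theorem exists_dset_subset_setOf_isSemistablePt
    (ρ : G →* ((Fin m → K) ≃ₗ[K] (Fin m → K))) (χ : G →* Kˣ) {y : Fin m → K}
    (hy : IsSemistablePt ρ χ y) :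
    ∃ g, eval y g ≠ 0 ∧ Dset g ⊆ {x | IsSemistablePt ρ χ x} := by
  obtain ⟨n, hn, g, hg, hgy⟩ := hy
  exact ⟨g, hgy, fun z hz => ⟨n, hn, g, hg, hz⟩⟩

variable [IsAlgClosed K]

theorem regOn_dset_of_regOn_dset_inter {S : Set (Fin m → K)}
    (hopen : ∀ y ∈ S, ∃ g, eval y g ≠ 0 ∧ Dset g ⊆ S)
    (hcodim : ∀ p : MvPolynomial (Fin m) K, 0 < p.totalDegree → ¬ {x | eval x p = 0} ⊆ Sᶜ)
    {f : MvPolynomial (Fin m) K} {u : FractionRing (MvPolynomial (Fin m) K)}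
    (hreg : RegOn (Dset f ∩ S) u) : RegOn (Dset f) u := by
  obtain ⟨A, B, hAB, hmk⟩ := IsFractionRing.exists_reduced_fraction (MvPolynomial (Fin m) K) u
  have hu : u * algebraMap _ _ (B : MvPolynomial (Fin m) K) = algebraMap _ _ A := by
    rw [← hmk]
    exact IsLocalization.mk'_spec _ _ _
  intro x hx
  refine ⟨A, B, fun hBx => ?_, hu⟩
  obtain ⟨p, hp, hpB, hpx⟩ :=
    exists_prime_dvd_of_map_eq_zero (eval x) (nonZeroDivisors.coe_ne_zero B) hBx
  have hpole : ∀ z ∈ Dset f ∩ S, eval z p ≠ 0 := by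
    intro z hz hpz
    obtain ⟨a, b, hbz, hab⟩ := hreg z hz
    obtain ⟨c, rfl⟩ := hp.dvd_of_dvd_reduced_den hAB hu hab hpB
    rw [map_mul, hpz, zero_mul] at hbz
    exact hbz rfl
  have hpf : ¬ p ∣ f := by
    rintro ⟨c, rfl⟩
    exact hx (show eval x (p * c) = 0 by rw [map_mul, hpx, zero_mul])
  refine hcodim p (totalDegree_pos_of_prime hp) fun y hy hyS => ?_
  obtain ⟨g, hgy, hgS⟩ := hopen y hyS
  refine hgy (hp.eval_eq_zero_of_forall_eval_ne_zero hpf (fun w hw hfw => ?_) hy)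
  by_contra hgw
  exact hpole w ⟨hfw, hgS hgw⟩ hw

theorem stdSect_dset_inter_setOf_isSemistablePt
    (ρ : G →* ((Fin m → K) ≃ₗ[K] (Fin m → K))) (χ δ : G →* Kˣ)
    (hcodim : ∀ f : MvPolynomial (Fin m) K, 0 < f.totalDegree →
      ¬ ({x | eval x f = 0} ⊆ {x | ¬ IsSemistablePt ρ χ x}))
    (f : MvPolynomial (Fin m) K) :
    stdSect ρ δ (Dset f ∩ {y | IsSemistablePt ρ χ y}) = stdSect ρ δ (Dset f) := by
  refine (stdSect_anti ρ δ Set.inter_subset_left).antisymm' fun u hu => ⟨hu.1, ?_⟩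
  exact regOn_dset_of_regOn_dset_inter
    (fun _ hy => exists_dset_subset_setOf_isSemistablePt ρ χ hy) hcodim hu.2

end Sections

theorem pushforward_and_pullback_of_linearized_sheaf_general
    {K G : Type} [Field K] [IsAlgClosed K] [Group G] {m : ℕ}
    (ρ : G →* ((Fin m → K) ≃ₗ[K] (Fin m → K)))
    (χ ε : G →* Kˣ)
    -- `codim_V V^{us}(G,χ) ≥ 2`: the unstable locus contains no hypersurface:
    (hcodim : ∀ f : MvPolynomial (Fin m) K, 0 < f.totalDegree →
      ¬ ({x | eval x f = 0} ⊆ {x | ¬ IsSemistablePt ρ χ x})) :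
    -- (i) `ψ_* L_{Y_χ,ε} = L_{Y_ε,ε}`: over every chart `D(f)` of `Y_ε`,
    (∀ (f : MvPolynomial (Fin m) K) (mm : ℕ), 1 ≤ mm → Semiinv ρ (ε ^ mm) f →
      stdSect ρ ε (Dset f ∩ {y | IsSemistablePt ρ χ y}) = stdSect ρ ε (Dset f)) ∧
    -- (ii) if `L_{Y_ε,ε}` is invertible, the canonical map
    -- `ψ* L_{Y_ε,ε} = ψ*ψ_* L_{Y_χ,ε} → L_{Y_χ,ε}` is an isomorphism: any local
    -- trivialization `s` of `L_{Y_ε,ε}` over `D(f)` trivializes `L_{Y_χ,ε}` over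
    -- `ψ⁻¹ D(f)`:
    (∀ (f : MvPolynomial (Fin m) K) (mm : ℕ)
        (s : FractionRing (MvPolynomial (Fin m) K)),
      1 ≤ mm → Semiinv ρ (ε ^ mm) f →
      s ∈ stdSect ρ ε (Dset f) →
      (∀ u ∈ stdSect ρ ε (Dset f), ∃ v ∈ stdSect ρ 1 (Dset f), u = s * v) →
      ∀ u ∈ stdSect ρ ε (Dset f ∩ {y | IsSemistablePt ρ χ y}),
        ∃ v ∈ stdSect ρ 1 (Dset f ∩ {y | IsSemistablePt ρ χ y}), u = s * v) := by
  refine ⟨fun f _ _ _ => stdSect_dset_inter_setOf_isSemistablePt ρ χ ε hcodim f, ?_⟩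
  intro f _ s _ _ _ htriv u hu
  rw [stdSect_dset_inter_setOf_isSemistablePt ρ χ ε hcodim f] at hu
  obtain ⟨v, hv, rfl⟩ := htriv u hu
  exact ⟨v, stdSect_anti ρ 1 Set.inter_subset_left hv, rfl⟩

theorem pushforward_and_pullback_of_linearized_sheaf
    {K G : Type} [Field K] [IsAlgClosed K] [CharZero K] [Group G] {m : ℕ}
    (ρ : G →* ((Fin m → K) ≃ₗ[K] (Fin m → K))) (hker : Finite ρ.ker)
    (χ ε : G →* Kˣ)
    -- `ε ∈ C(χ)`:
    (hcone : {x : Fin m → K | IsSemistablePt ρ χ x} ⊆ {x | IsSemistablePt ρ ε x})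
    -- `codim_V V^{us}(G,χ) ≥ 2`: the unstable locus contains no hypersurface:
    (hcodim : ∀ f : MvPolynomial (Fin m) K, 0 < f.totalDegree →
      ¬ ({x | eval x f = 0} ⊆ {x | ¬ IsSemistablePt ρ χ x})) :
    -- (i) `ψ_* L_{Y_χ,ε} = L_{Y_ε,ε}`: over every chart `D(f)` of `Y_ε`,
    (∀ (f : MvPolynomial (Fin m) K) (mm : ℕ), 1 ≤ mm → Semiinv ρ (ε ^ mm) f →
      stdSect ρ ε (Dset f ∩ {y | IsSemistablePt ρ χ y}) = stdSect ρ ε (Dset f)) ∧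
    -- (ii) if `L_{Y_ε,ε}` is invertible, the canonical map
    -- `ψ* L_{Y_ε,ε} = ψ*ψ_* L_{Y_χ,ε} → L_{Y_χ,ε}` is an isomorphism: any local
    -- trivialization `s` of `L_{Y_ε,ε}` over `D(f)` trivializes `L_{Y_χ,ε}` over
    -- `ψ⁻¹ D(f)`:
    (∀ (f : MvPolynomial (Fin m) K) (mm : ℕ)
        (s : FractionRing (MvPolynomial (Fin m) K)),
      1 ≤ mm → Semiinv ρ (ε ^ mm) f →
      s ∈ stdSect ρ ε (Dset f) →
      (∀ u ∈ stdSect ρ ε (Dset f), ∃ v ∈ stdSect ρ 1 (Dset f), u = s * v) →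
      ∀ u ∈ stdSect ρ ε (Dset f ∩ {y | IsSemistablePt ρ χ y}),
        ∃ v ∈ stdSect ρ 1 (Dset f ∩ {y | IsSemistablePt ρ χ y}), u = s * v) :=
  pushforward_and_pullback_of_linearized_sheaf_general ρ χ ε hcodim
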